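/- arXiv:1304.7923 — 2 statements merged into one kernel-verified Lean document; each statement's English description precedes it below -/
import Mathlib

section
/- Suppose integers a1, a2, a3, b1, b2, b3 satisfy a1+a2+a3+b1+b2+b3 = 0 together with the inequalities a_i + nu(s_{ij}) + b_j >= 0 for all i, j, where s_{ij} are the entries of the matrix s = [[1, 1, t^{-1}], [-(t^{-2}+1), -(t^{-1}+1), -(t^{-2}+1)], [t^{-1}, 1, 1]] and nu is the valuation at infinity on Q(t). Then a1 = a2 = a3 = -b1 = -b2 = -b3. -/
open RatFunc

/-- The conjugating matrix `s` over `ℚ(t)`. -/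
noncomputable def smat : Matrix (Fin 3) (Fin 3) (RatFunc ℚ) :=
  !![1, 1, X⁻¹;
     -(X⁻¹ ^ 2 + 1), -(X⁻¹ + 1), -(X⁻¹ ^ 2 + 1);
     X⁻¹, 1, 1]

/-- The valuation at infinity on `ℚ(t)`: `ν(p/q) = deg q - deg p`. -/
noncomputable def nuInfty (x : RatFunc ℚ) : ℤ := -x.intDegree

namespace RatFunc

variable {K : Type*} [Field K]

theorem intDegree_X_pow_add_C (n : ℕ) (c : K) : intDegree (X ^ n + C c : K⟮X⟯) = n := by
  rw [← algebraMap_X, ← algebraMap_C, ← map_pow, ← map_add, intDegree_polynomial,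
    Polynomial.natDegree_X_pow_add_C]

theorem intDegree_X_pow (n : ℕ) : intDegree (X ^ n : K⟮X⟯) = n := by
  simpa using intDegree_X_pow_add_C (K := K) n 0

theorem intDegree_X_inv_pow_add_one {n : ℕ} (hn : n ≠ 0) :
    intDegree ((X : K⟮X⟯)⁻¹ ^ n + 1) = 0 := by
  have hXn : (X : K⟮X⟯) ^ n ≠ 0 := pow_ne_zero n X_ne_zero
  have hXn1 : (X : K⟮X⟯) ^ n + C 1 ≠ 0 := fun h => by
    have := intDegree_X_pow_add_C (K := K) n 1
    rw [h, intDegree_zero] at this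
    omega
  have : (X : K⟮X⟯)⁻¹ ^ n + 1 = (X ^ n + C 1) / X ^ n := by
    rw [map_one, add_div, div_self hXn, one_div, inv_pow, add_comm]
  rw [this, intDegree_div hXn1 hXn, intDegree_X_pow_add_C, intDegree_X_pow, sub_self]

end RatFunc

theorem nuInfty_smat (i j : Fin 3) : nuInfty (smat i j) = !![0, 0, 1; 0, 0, 0; 1, 0, 0] i j := by
  have hX₁ := intDegree_X_inv_pow_add_one (K := ℚ) one_ne_zero
  have hX₂ := intDegree_X_inv_pow_add_one (K := ℚ) two_ne_zero
  rw [pow_one] at hX₁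
  fin_cases i <;> fin_cases j <;>
    simp [smat, nuInfty, intDegree_inv, intDegree_neg, hX₁, hX₂, -neg_add_rev, -inv_pow]

/-- If integers `a₁, a₂, a₃, b₁, b₂, b₃` satisfy `a₁+a₂+a₃+b₁+b₂+b₃ = 0` and
`aᵢ + ν(sᵢⱼ) + bⱼ ≥ 0` for all `i, j` (with `ν` the valuation at infinity), then
`a₁ = a₂ = a₃ = -b₁ = -b₂ = -b₃`.  This is the key computation showing that the
apartments `Σ_f` and `Σ_k` meet in exactly one vertex. -/
theorem apartments_meet_in_one_vertex (a b : Fin 3 → ℤ)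
    (hsum : a 0 + a 1 + a 2 + b 0 + b 1 + b 2 = 0)
    (hineq : ∀ i j : Fin 3, 0 ≤ a i + nuInfty (smat i j) + b j) :
    a 0 = a 1 ∧ a 1 = a 2 ∧ a 2 = -b 0 ∧ b 0 = b 1 ∧ b 1 = b 2 := by
  simp only [nuInfty_smat, Fin.forall_fin_succ, Fin.succ_zero_eq_one, Fin.succ_one_eq_two,
    IsEmpty.forall_iff, and_true, Matrix.of_apply, Matrix.cons_val', Matrix.cons_val_fin_one,
    Matrix.cons_val_zero, Matrix.cons_val_succ, add_zero] at hineq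
  -- ν vanishes on the diagonal, so the diagonal inequalities add up to `hsum` and are equalities;
  -- the zero entries ν(s₁₂), ν(s₂₁), ν(s₂₃), ν(s₃₂) then give a₁ ≤ a₂ ≤ a₁ and a₂ ≤ a₃ ≤ a₂.
  omega
end

section
/- For n = 0 there do NOT exist integers a, b, c and a matrix m in GL_3(O) with f^0 = b * diag(t^{-a}, t^{-b}, t^{-c}) * m, where b = [[1, t^{-1}-1, t], [0, 1-t^{-1}, -(t^{-1}+t)], [0, 0, 1]] and O = Q[t^{-1}]. Equivalently, b itself is not expressible as a diagonal matrix of powers of t times an element of GL_3(O). -/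
open RatFunc

/-- The matrix `b_{f,k}` taking the standard frame to the frame of `Σ_{f,k}`. -/
noncomputable def bfk : Matrix (Fin 3) (Fin 3) (RatFunc ℚ) :=
  !![1, X⁻¹ - 1, X;
     0, 1 - X⁻¹, -(X⁻¹ + X);
     0, 0, 1]

/-- Membership in the valuation ring `𝒪 = ℚ[t⁻¹]` of the valuation at infinity. -/
noncomputable def InO (x : RatFunc ℚ) : Prop :=
  ∃ p : Polynomial ℚ, x = Polynomial.aeval (X⁻¹ : RatFunc ℚ) p

/-!
Compare entries in `1 = b ⬝ diag(t^{-a}, t^{-b}, t^{-c}) ⬝ m`, using that `b` is upper triangular: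
`m₀₀ = t^a`, `m₂₂ = t^c`, `m₁₂ = t^b (t⁻¹ + t) / (1 - t⁻¹)` and `det m = t^{a+b+c} / (1 - t⁻¹)`.
As `1 - t⁻¹` is a unit of `𝒪` and `t⁻¹ + t` has the pole order of `t`, integrality of these entries
forces `a ≤ 0`, `c ≤ 0`, `b ≤ -1`, whereas integrality of `(det m)⁻¹` forces `a + b + c ≥ 0`.
-/

open WithZero

section TrivialOn

variable {Γ : Type*} [LinearOrderedCommMonoidWithZero Γ] {A : Type*} [CommSemiring A]
  {B : Type*} [Ring B] [Algebra A B] {v : Valuation B Γ} [v.IsTrivialOn A]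

theorem Polynomial.valuation_aeval_le_one {w : B} (hw : v w ≤ 1) (p : Polynomial A) :
    v (p.aeval w) ≤ 1 := by
  induction p using Polynomial.induction_on' with
  | add p q hp hq => simpa only [map_add] using (v.map_add _ _).trans (max_le hp hq)
  | monomial n a =>
    rw [Polynomial.aeval_monomial, map_mul, map_pow]
    exact mul_le_one' (Valuation.IsTrivialOn.valuation_algebraMap_le_one v a) (pow_le_one' hw n)

end TrivialOn

open scoped Classical

section InftyValuation

variable {F : Type*} [Field F]

lemma inftyValuation_X_inv : inftyValuation F X⁻¹ = exp (-1) := by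
  rw [← zpow_neg_one, inftyValuation.X_zpow]

lemma inftyValuation_one_sub_X_inv : inftyValuation F (1 - X⁻¹) = 1 :=
  Valuation.map_one_sub_of_lt _ (by rw [inftyValuation_X_inv, ← exp_zero, exp_lt_exp]; norm_num)

lemma inftyValuation_X_inv_add_X : inftyValuation F (X⁻¹ + X) = exp 1 := by
  rw [Valuation.map_add_eq_of_lt_right, inftyValuation.X]
  rw [inftyValuation_X_inv, inftyValuation.X, exp_lt_exp]
  norm_num

lemma one_sub_X_inv_ne_zero : (1 - X⁻¹ : RatFunc F) ≠ 0 :=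
  (inftyValuation F).ne_zero_iff.mp (by rw [inftyValuation_one_sub_X_inv]; exact one_ne_zero)

end InftyValuation

lemma InO.inftyValuation_le_one {x : RatFunc ℚ} (hx : InO x) : inftyValuation ℚ x ≤ 1 := by
  obtain ⟨p, rfl⟩ := hx
  -- `InO` evaluates through `algebraRat`, not the `RatFunc` algebra carrying Mathlib's instance.
  have : (inftyValuation ℚ).IsTrivialOn ℚ :=
    ⟨fun a ha => by rw [← inftyValuation.C ℚ ha, eq_ratCast, eq_ratCast RatFunc.C]⟩
  exact p.valuation_aeval_le_one (by rw [inftyValuation_X_inv, ← exp_zero, exp_le_exp]; norm_num)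

lemma InO.nonpos_of_inftyValuation_eq {x : RatFunc ℚ} {n : ℤ} (hx : InO x)
    (h : inftyValuation ℚ x = exp n) : n ≤ 0 := by
  rw [← exp_le_exp, exp_zero, ← h]
  exact hx.inftyValuation_le_one

lemma det_bfk : bfk.det = 1 - X⁻¹ := by
  simp [bfk, Matrix.det_fin_three]

section Factorization

variable {a b c : ℤ} {m : Matrix (Fin 3) (Fin 3) (RatFunc ℚ)}

lemma entries_of_one_eq_bfk_mul
    (h : 1 = bfk * Matrix.diagonal ![X ^ (-a), X ^ (-b), X ^ (-c)] * m) :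
    m 0 0 = X ^ a ∧ m 2 2 = X ^ c ∧ m 1 2 = X ^ b * (X⁻¹ + X) / (1 - X⁻¹) := by
  rw [Matrix.mul_assoc] at h
  have hij (i j : Fin 3) := congr_fun (congr_fun h i) j
  have h00 := hij 0 0
  have h10 := hij 1 0
  have h12 := hij 1 2
  have h20 := hij 2 0
  have h22 := hij 2 2
  simp [bfk, Matrix.mul_apply, Fin.sum_univ_three] at h00 h10 h12 h20 h22
  have hX (n : ℤ) : (X : RatFunc ℚ) ^ n ≠ 0 := zpow_ne_zero n X_ne_zero
  have hm20 : m 2 0 = 0 := h20.resolve_left (hX c)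
  have hm10 : m 1 0 = 0 := by
    simpa [hm20, one_sub_X_inv_ne_zero, hX] using h10.symm
  have hm22 : m 2 2 = X ^ c := by
    simpa using (inv_mul_eq_iff_eq_mul₀ (hX c)).mp h22.symm
  refine ⟨?_, hm22, ?_⟩
  · simp only [hm10, hm20, mul_zero, add_zero] at h00
    simpa using (inv_mul_eq_iff_eq_mul₀ (hX a)).mp h00.symm
  · rw [eq_div_iff one_sub_X_inv_ne_zero]
    rw [hm22, inv_mul_cancel₀ (hX c)] at h12
    linear_combination (-X ^ b) * h12 - (1 - X⁻¹) * m 1 2 * mul_inv_cancel₀ (hX b)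

lemma det_of_one_eq_bfk_mul
    (h : 1 = bfk * Matrix.diagonal ![X ^ (-a), X ^ (-b), X ^ (-c)] * m) :
    m.det = X ^ (a + b + c) / (1 - X⁻¹) := by
  have hd := congr_arg Matrix.det h
  rw [Matrix.det_one, Matrix.det_mul, Matrix.det_mul, Matrix.det_diagonal, Fin.prod_univ_three,
    det_bfk] at hd
  simp only [Matrix.cons_val_zero, Matrix.cons_val_one, Matrix.cons_val_two, Matrix.tail_cons,
    Matrix.head_cons] at hd
  rw [← zpow_add₀ X_ne_zero, ← zpow_add₀ X_ne_zero, ← neg_add, ← neg_add, zpow_neg] at hd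
  rw [eq_div_iff one_sub_X_inv_ne_zero]
  linear_combination (-X ^ (a + b + c)) * hd
    - (1 - X⁻¹) * m.det * mul_inv_cancel₀ (zpow_ne_zero (a + b + c) (X_ne_zero (K := ℚ)))

end Factorization

/-- `f⁰ = 1` is *not* expressible as `b_{f,k} ⬝ diag(t^{-a}, t^{-b}, t^{-c}) ⬝ m` with
`m ∈ GL₃(𝒪)`; that is, the base vertex `v` does not lie in the apartment `Σ_{f,k}`. -/
theorem v_not_in_apartment :
    ¬ ∃ (a b c : ℤ) (m : Matrix (Fin 3) (Fin 3) (RatFunc ℚ)),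
        (∀ i j, InO (m i j)) ∧ InO m.det ∧ InO m.det⁻¹ ∧
        (1 : Matrix (Fin 3) (Fin 3) (RatFunc ℚ)) =
          bfk * Matrix.diagonal ![X ^ (-a), X ^ (-b), X ^ (-c)] * m := by
  rintro ⟨a, b, c, m, hm, -, hdet_inv, h⟩
  obtain ⟨h00, h22, h12⟩ := entries_of_one_eq_bfk_mul h
  have ha : a ≤ 0 := (hm 0 0).nonpos_of_inftyValuation_eq (by rw [h00, inftyValuation.X_zpow])
  have hc : c ≤ 0 := (hm 2 2).nonpos_of_inftyValuation_eq (by rw [h22, inftyValuation.X_zpow])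
  have hb : b + 1 ≤ 0 := (hm 1 2).nonpos_of_inftyValuation_eq (by
    rw [h12, map_div₀, map_mul, inftyValuation.X_zpow, inftyValuation_X_inv_add_X,
      inftyValuation_one_sub_X_inv, div_one, exp_add])
  have habc : -(a + b + c) ≤ 0 := hdet_inv.nonpos_of_inftyValuation_eq (by
    rw [det_of_one_eq_bfk_mul h, inv_div, map_div₀, inftyValuation.X_zpow,
      inftyValuation_one_sub_X_inv, one_div, exp_neg])
  omega
end
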